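/- There exist an integer D ≥ 1, unit vectors ψ, ψ′ ∈ ℂ^D, and two quadruples (A_1, A_2, A_3, A_4) and (A′_1, A′_2, A′_3, A′_4) of Hermitian unitary D×D complex matrices such that ⟨ψ, β̂ψ⟩ = 4 and ⟨ψ′, β̂′ψ′⟩ = 4 (both attaining the maximal quantum value 4 of the binary temporal expression τ_2), yet there exists no D×D unitary matrix U with U·A_i·U† = A′_i for all i ∈ {1,2,3,4}. Hence, without an assumption on the prepared state, the measurements attaining the maximal violation of the binary temporal inequality are not unique up to unitary equivalence. -/
import Mathlib


open Matrix Finset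

noncomputable section

/-- The binary temporal Bell operator built from four Hermitian unitary observables. -/
def binaryTemporalOp (D : ℕ) (A : Fin 4 → Matrix (Fin D) (Fin D) ℂ) :
    Matrix (Fin D) (Fin D) ℂ :=
  ((Real.sqrt 2 : ℂ))⁻¹ •
    (A 0 * A 2 - A 0 * A 3 + A 1 * A 2 + A 1 * A 3
      + A 2 * A 0 - A 3 * A 0 + A 2 * A 1 + A 3 * A 1)

namespace BTaux

noncomputable def r : ℂ := ((Real.sqrt 2 : ℝ) : ℂ)⁻¹

lemma hr_star : (starRingEnd ℂ) r = r := by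
  simp [r, ← Complex.ofReal_inv]

lemma hr_mul : r * r = 1/2 := by
  rw [r, ← mul_inv]
  norm_cast
  rw [Real.mul_self_sqrt (by norm_num)]
  norm_num

lemma hs_ne : ((Real.sqrt 2 : ℝ) : ℂ) ≠ 0 := by
  simpa using (Real.sqrt_ne_zero' (x := 2)).2 (by norm_num)

noncomputable def A : Fin 4 → Matrix (Fin 4) (Fin 4) ℂ :=
  ![!![1,0,0,0; 0,-1,0,0; 0,0,1,0; 0,0,0,-1],
    !![0,1,0,0; 1,0,0,0; 0,0,0,1; 0,0,1,0],
    !![r,r,0,0; r,-r,0,0; 0,0,r,r; 0,0,r,-r],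
    !![-r,r,0,0; r,r,0,0; 0,0,-r,r; 0,0,r,r]]

noncomputable def A' : Fin 4 → Matrix (Fin 4) (Fin 4) ℂ :=
  ![!![1,0,0,0; 0,-1,0,0; 0,0,1,0; 0,0,0,1],
    !![0,1,0,0; 1,0,0,0; 0,0,1,0; 0,0,0,1],
    !![r,r,0,0; r,-r,0,0; 0,0,1,0; 0,0,0,1],
    !![-r,r,0,0; r,r,0,0; 0,0,1,0; 0,0,0,1]]

lemma herm (i : Fin 4) : (A i).IsHermitian := by
  fin_cases i <;>
  · ext a b
    fin_cases a <;> fin_cases b <;>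
      simp [A, Matrix.IsHermitian, Matrix.conjTranspose_apply, hr_star, Matrix.vecHead, Matrix.vecTail]

lemma herm' (i : Fin 4) : (A' i).IsHermitian := by
  fin_cases i <;>
  · ext a b
    fin_cases a <;> fin_cases b <;>
      simp [A', Matrix.IsHermitian, Matrix.conjTranspose_apply, hr_star, Matrix.vecHead, Matrix.vecTail]

lemma unit (i : Fin 4) : A i ∈ Matrix.unitaryGroup (Fin 4) ℂ := by
  rw [Matrix.mem_unitaryGroup_iff, Matrix.star_eq_conjTranspose, (herm i).eq]
  fin_cases i <;>
  · ext a b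
    fin_cases a <;> fin_cases b <;>
      simp [A, Matrix.mul_apply, Fin.sum_univ_four, hr_mul, Matrix.vecHead, Matrix.vecTail] <;>
      ring_nf <;> simp [hr_mul] <;> ring_nf

lemma unit' (i : Fin 4) : A' i ∈ Matrix.unitaryGroup (Fin 4) ℂ := by
  rw [Matrix.mem_unitaryGroup_iff, Matrix.star_eq_conjTranspose, (herm' i).eq]
  fin_cases i <;>
  · ext a b
    fin_cases a <;> fin_cases b <;>
      simp [A', Matrix.mul_apply, Fin.sum_univ_four, hr_mul, Matrix.vecHead, Matrix.vecTail] <;>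
      ring_nf <;> simp [hr_mul] <;> ring_nf

noncomputable def ψ : Fin 4 → ℂ := ![1,0,0,0]

lemma norm_ψ : ∑ i, Complex.normSq (ψ i) = 1 := by
  simp [ψ, Fin.sum_univ_four]

lemma val_A : star ψ ⬝ᵥ (binaryTemporalOp 4 A).mulVec ψ = 4 := by
  have hr2 : ((Real.sqrt 2 : ℝ) : ℂ) * r = 1 := by
    rw [r]; exact mul_inv_cancel₀ hs_ne
  simp [binaryTemporalOp, ψ, A, dotProduct, Matrix.mulVec, Matrix.mul_apply,
    Fin.sum_univ_four, Matrix.vecHead, Matrix.vecTail, Matrix.smul_apply]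
  rw [inv_eq_one_div]
  field_simp
  linear_combination ((-8 : ℂ)*r)*hr2 + 8*((Real.sqrt 2 : ℝ) : ℂ)*hr_mul

lemma val_A' : star ψ ⬝ᵥ (binaryTemporalOp 4 A').mulVec ψ = 4 := by
  have hr2 : ((Real.sqrt 2 : ℝ) : ℂ) * r = 1 := by
    rw [r]; exact mul_inv_cancel₀ hs_ne
  simp [binaryTemporalOp, ψ, A', dotProduct, Matrix.mulVec, Matrix.mul_apply,
    Fin.sum_univ_four, Matrix.vecHead, Matrix.vecTail, Matrix.smul_apply]
  rw [inv_eq_one_div]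
  field_simp
  linear_combination ((-8 : ℂ)*r)*hr2 + 8*((Real.sqrt 2 : ℝ) : ℂ)*hr_mul

lemma no_unitary : ¬ ∃ U ∈ Matrix.unitaryGroup (Fin 4) ℂ, ∀ i, U * A i * Uᴴ = A' i := by
  rintro ⟨U, hU, h⟩
  have h0 := congrArg Matrix.trace (h 0)
  rw [Matrix.trace_mul_cycle, ← Matrix.star_eq_conjTranspose] at h0
  rw [hU.1, one_mul] at h0
  have hA : Matrix.trace (A 0) = 0 := by
    simp [A, Matrix.trace, Matrix.diag, Fin.sum_univ_four, Matrix.vecHead, Matrix.vecTail]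
  have hA' : Matrix.trace (A' 0) = 2 := by
    simp [A', Matrix.trace, Matrix.diag, Fin.sum_univ_four, Matrix.vecHead, Matrix.vecTail]
    ring
  rw [hA, hA'] at h0
  norm_num at h0

end BTaux

/-- Without an assumption on the prepared state, measurements attaining the maximal
quantum value `4` of the binary temporal expression are not unique up to unitary
equivalence: there exist two quadruples of Hermitian unitary observables, each
attaining value `4` on some unit vector, that are not unitarily conjugate. -/
theorem binary_maximal_violation_not_unique :
    ∃ (D : ℕ) (_ : 1 ≤ D) (ψ ψ' : Fin D → ℂ)
      (A A' : Fin 4 → Matrix (Fin D) (Fin D) ℂ),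
      (∑ i, Complex.normSq (ψ i) = 1) ∧
      (∑ i, Complex.normSq (ψ' i) = 1) ∧
      (∀ i, (A i).IsHermitian ∧ A i ∈ Matrix.unitaryGroup (Fin D) ℂ) ∧
      (∀ i, (A' i).IsHermitian ∧ A' i ∈ Matrix.unitaryGroup (Fin D) ℂ) ∧
      star ψ ⬝ᵥ (binaryTemporalOp D A).mulVec ψ = 4 ∧
      star ψ' ⬝ᵥ (binaryTemporalOp D A').mulVec ψ' = 4 ∧
      ¬ ∃ U ∈ Matrix.unitaryGroup (Fin D) ℂ, ∀ i, U * A i * Uᴴ = A' i := by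
  exact ⟨4, by norm_num, BTaux.ψ, BTaux.ψ, BTaux.A, BTaux.A',
    BTaux.norm_ψ, BTaux.norm_ψ,
    fun i => ⟨BTaux.herm i, BTaux.unit i⟩,
    fun i => ⟨BTaux.herm' i, BTaux.unit' i⟩,
    BTaux.val_A, BTaux.val_A', BTaux.no_unitary⟩
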